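/- Let u, q₁, q₂ : ℝ³ → ℝ be smooth (C^∞) functions of (t,x,y) with u_y nowhere zero. Suppose u satisfies the 3D rdDym equation u_ty = u_x·u_xy − u_y·u_xx, q₁ satisfies q₁,t = u_x/u_y and q₁,x = 1/u_y, and q₂ satisfies q₂,t = (u_x/u_y)·q₁,y − q₁,x and q₂,x = q₁,y/u_y at every point. Then the function v = (2·q₂ − q₁·q₁,y)·u_y satisfies the linearized equation v_ty − u_x·v_xy + u_y·v_xx − u_xy·v_x + u_xx·v_y = 0 everywhere (i.e., v is a nonlocal shadow in the positive covering). -/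

import Mathlib

noncomputable section

/-- Partial derivative with respect to the first coordinate `t`. -/
def pt (u : ℝ × ℝ × ℝ → ℝ) : ℝ × ℝ × ℝ → ℝ :=
  fun p => deriv (fun s => u (s, p.2.1, p.2.2)) p.1

/-- Partial derivative with respect to the second coordinate `x`. -/
def px (u : ℝ × ℝ × ℝ → ℝ) : ℝ × ℝ × ℝ → ℝ :=
  fun p => deriv (fun s => u (p.1, s, p.2.2)) p.2.1

/-- Partial derivative with respect to the third coordinate `y`. -/
def py (u : ℝ × ℝ × ℝ → ℝ) : ℝ × ℝ × ℝ → ℝ :=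
  fun p => deriv (fun s => u (p.1, p.2.1, s)) p.2.2

/-- The 3D rdDym equation `u_ty = u_x·u_xy − u_y·u_xx`. -/
def rdDym (u : ℝ × ℝ × ℝ → ℝ) : Prop :=
  ∀ p, py (pt u) p = px u p * py (px u) p - py u p * px (px u) p

/-- The linearization `ℓ(v) = v_ty − u_x·v_xy + u_y·v_xx − u_xy·v_x + u_xx·v_y = 0`
of the rdDym equation along `u`. -/
def linearized (u v : ℝ × ℝ × ℝ → ℝ) : Prop :=
  ∀ p, py (pt v) p - px u p * py (px v) p + py u p * px (px v) p
      - py (px u) p * px v p + px (px u) p * py v p = 0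



/-- Directional derivative operator. -/
def D (v : ℝ × ℝ × ℝ) (f : ℝ × ℝ × ℝ → ℝ) : ℝ × ℝ × ℝ → ℝ :=
  fun p => fderiv ℝ f p v

variable {f g : ℝ × ℝ × ℝ → ℝ}

lemma D_contDiff (v : ℝ × ℝ × ℝ) (hf : ContDiff ℝ (⊤ : ℕ∞) f) : ContDiff ℝ (⊤ : ℕ∞) (D v f) := by
  have h1 : ContDiff ℝ (⊤ : ℕ∞) (fderiv ℝ f) := hf.fderiv_right (by simp)
  exact (ContinuousLinearMap.apply ℝ ℝ v).contDiff.comp h1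

lemma D_add (v : ℝ × ℝ × ℝ) (f g : ℝ × ℝ × ℝ → ℝ) (hf : ContDiff ℝ (⊤ : ℕ∞) f)
    (hg : ContDiff ℝ (⊤ : ℕ∞) g) :
    D v (fun p => f p + g p) = fun p => D v f p + D v g p := by
  funext p
  simp only [D]
  rw [fderiv_fun_add (hf.differentiable (by simp) p) (hg.differentiable (by simp) p)]
  simp

lemma D_sub (v : ℝ × ℝ × ℝ) (f g : ℝ × ℝ × ℝ → ℝ) (hf : ContDiff ℝ (⊤ : ℕ∞) f)
    (hg : ContDiff ℝ (⊤ : ℕ∞) g) :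
    D v (fun p => f p - g p) = fun p => D v f p - D v g p := by
  funext p
  simp only [D]
  rw [fderiv_fun_sub (hf.differentiable (by simp) p) (hg.differentiable (by simp) p)]
  simp

lemma D_mul (v : ℝ × ℝ × ℝ) (f g : ℝ × ℝ × ℝ → ℝ) (hf : ContDiff ℝ (⊤ : ℕ∞) f)
    (hg : ContDiff ℝ (⊤ : ℕ∞) g) :
    D v (fun p => f p * g p) = fun p => D v f p * g p + f p * D v g p := by
  funext p
  simp only [D]
  rw [fderiv_fun_mul (hf.differentiable (by simp) p) (hg.differentiable (by simp) p)]
  simp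
  ring

lemma D_const (v : ℝ × ℝ × ℝ) (c : ℝ) : D v (fun _ => c) = fun _ => 0 := by
  funext p
  simp [D]

lemma D_const_mul (v : ℝ × ℝ × ℝ) (c : ℝ) (f : ℝ × ℝ × ℝ → ℝ) (hf : ContDiff ℝ (⊤ : ℕ∞) f) :
    D v (fun p => c * f p) = fun p => c * D v f p := by
  funext p
  simp only [D]
  rw [fderiv_const_mul (hf.differentiable (by simp) p)]
  simp

lemma D_comm (v w : ℝ × ℝ × ℝ) (hf : ContDiff ℝ (⊤ : ℕ∞) f) :
    D v (D w f) = D w (D v f) := by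
  funext p
  have hdf : Differentiable ℝ (fderiv ℝ f) :=
    (hf.fderiv_right (m := (⊤ : ℕ∞)) (by simp)).differentiable (by simp)
  have key : ∀ a b : ℝ × ℝ × ℝ,
      D a (D b f) p = fderiv ℝ (fderiv ℝ f) p a b := by
    intro a b
    rw [show D a (D b f) p = fderiv ℝ (fun q => fderiv ℝ f q b) p a from rfl,
      fderiv_clm_apply (c := fderiv ℝ f) (u := fun _ => b) (hdf p) (differentiableAt_const b)]
    simp
  rw [key v w, key w v]
  exact (hf.contDiffAt.isSymmSndFDerivAt (by simp; exact WithTop.coe_le_coe.mpr le_top)) v w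

lemma pt_eq (hf : ContDiff ℝ (⊤ : ℕ∞) f) : pt f = D (1, 0, 0) f := by
  funext p
  have hc : HasDerivAt (fun s : ℝ => ((s, p.2.1, p.2.2) : ℝ × ℝ × ℝ))
      ((1 : ℝ), (0 : ℝ), (0 : ℝ)) p.1 :=
    (hasDerivAt_id p.1).prodMk (hasDerivAt_const p.1 _)
  exact (((hf.differentiable (by simp) p).hasFDerivAt).comp_hasDerivAt p.1 hc).deriv

lemma px_eq (hf : ContDiff ℝ (⊤ : ℕ∞) f) : px f = D (0, 1, 0) f := by
  funext p
  have hc : HasDerivAt (fun s : ℝ => ((p.1, s, p.2.2) : ℝ × ℝ × ℝ))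
      ((0 : ℝ), (1 : ℝ), (0 : ℝ)) p.2.1 :=
    (hasDerivAt_const p.2.1 _).prodMk ((hasDerivAt_id p.2.1).prodMk (hasDerivAt_const p.2.1 _))
  exact (((hf.differentiable (by simp) p).hasFDerivAt).comp_hasDerivAt p.2.1 hc).deriv

lemma py_eq (hf : ContDiff ℝ (⊤ : ℕ∞) f) : py f = D (0, 0, 1) f := by
  funext p
  have hc : HasDerivAt (fun s : ℝ => ((p.1, p.2.1, s) : ℝ × ℝ × ℝ))
      ((0 : ℝ), (0 : ℝ), (1 : ℝ)) p.2.2 :=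
    (hasDerivAt_const p.2.2 _).prodMk ((hasDerivAt_const p.2.2 _).prodMk (hasDerivAt_id p.2.2))
  exact (((hf.differentiable (by simp) p).hasFDerivAt).comp_hasDerivAt p.2.2 hc).deriv


lemma D_big1 (e : ℝ × ℝ × ℝ) (f2 c w b : ℝ × ℝ × ℝ → ℝ) (hf2 : ContDiff ℝ (⊤ : ℕ∞) f2)
    (hc : ContDiff ℝ (⊤ : ℕ∞) c) (hw : ContDiff ℝ (⊤ : ℕ∞) w) (hb : ContDiff ℝ (⊤ : ℕ∞) b) :
    D e (fun p => (2 * f2 p - c p * w p) * b p) =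
      fun p => (2 * D e f2 p - (D e c p * w p + c p * D e w p)) * b p
        + (2 * f2 p - c p * w p) * D e b p := by
  simp only [D_mul e (fun p => 2 * f2 p - c p * w p) b
      ((contDiff_const.mul hf2).sub (hc.mul hw)) hb,
    D_sub e (fun p => 2 * f2 p) (fun p => c p * w p) (contDiff_const.mul hf2) (hc.mul hw),
    D_const_mul e 2 f2 hf2, D_mul e c w hc hw]

lemma D_big2b (e : ℝ × ℝ × ℝ) (A B C c w b f2 K : ℝ × ℝ × ℝ → ℝ)
    (hA : ContDiff ℝ (⊤ : ℕ∞) A) (hB : ContDiff ℝ (⊤ : ℕ∞) B) (hC : ContDiff ℝ (⊤ : ℕ∞) C)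
    (hc : ContDiff ℝ (⊤ : ℕ∞) c) (hw : ContDiff ℝ (⊤ : ℕ∞) w) (hb : ContDiff ℝ (⊤ : ℕ∞) b)
    (hf2 : ContDiff ℝ (⊤ : ℕ∞) f2) (hK : ContDiff ℝ (⊤ : ℕ∞) K) :
    D e (fun p => (2 * A p - (B p * w p + c p * C p)) * b p
        + (2 * f2 p - c p * w p) * K p) =
      fun p => ((2 * D e A p - ((D e B p * w p + B p * D e w p)
            + (D e c p * C p + c p * D e C p))) * b p
          + (2 * A p - (B p * w p + c p * C p)) * D e b p)
        + ((2 * D e f2 p - (D e c p * w p + c p * D e w p)) * K p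
          + (2 * f2 p - c p * w p) * D e K p) := by
  simp only [
    D_add e (fun p => (2 * A p - (B p * w p + c p * C p)) * b p)
      (fun p => (2 * f2 p - c p * w p) * K p)
      (((contDiff_const.mul hA).sub ((hB.mul hw).add (hc.mul hC))).mul hb)
      (((contDiff_const.mul hf2).sub (hc.mul hw)).mul hK),
    D_mul e (fun p => 2 * A p - (B p * w p + c p * C p)) b
      ((contDiff_const.mul hA).sub ((hB.mul hw).add (hc.mul hC))) hb,
    D_mul e (fun p => 2 * f2 p - c p * w p) K
      ((contDiff_const.mul hf2).sub (hc.mul hw)) hK,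
    D_sub e (fun p => 2 * A p) (fun p => B p * w p + c p * C p)
      (contDiff_const.mul hA) ((hB.mul hw).add (hc.mul hC)),
    D_sub e (fun p => 2 * f2 p) (fun p => c p * w p) (contDiff_const.mul hf2) (hc.mul hw),
    D_add e (fun p => B p * w p) (fun p => c p * C p) (hB.mul hw) (hc.mul hC),
    D_mul e B w hB hw, D_mul e c C hc hC, D_mul e c w hc hw,
    D_const_mul e 2 A hA, D_const_mul e 2 f2 hf2]

set_option maxHeartbeats 2000000 in
lemma core (u q₁ q₂ : ℝ × ℝ × ℝ → ℝ) (hu : ContDiff ℝ (⊤ : ℕ∞) u) (hq₁ : ContDiff ℝ (⊤ : ℕ∞) q₁)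
    (hq₂ : ContDiff ℝ (⊤ : ℕ∞) q₂) (hb : ∀ p, D (0,0,1) u p ≠ 0)
    (heq : D (0,0,1) (D (1,0,0) u) = fun p => (D (0,1,0) u p) * (D (0,0,1) (D (0,1,0) u) p) - (D (0,0,1) u p) * (D (0,1,0) (D (0,1,0) u) p))
    (h1 : ∀ p, (D (1,0,0) q₁ p) = (D (0,1,0) u p) / (D (0,0,1) u p))
    (h2 : ∀ p, (D (0,1,0) q₁ p) = 1 / (D (0,0,1) u p))
    (h3 : ∀ p, (D (1,0,0) q₂ p) = ((D (0,1,0) u p) / (D (0,0,1) u p)) * (D (0,0,1) q₁ p) - 1 / (D (0,0,1) u p))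
    (h4 : ∀ p, (D (0,1,0) q₂ p) = (D (0,0,1) q₁ p) / (D (0,0,1) u p)) :
    ∀ p, D (0,0,1) (D (1,0,0) (fun p => (2 * q₂ p - q₁ p * D (0,0,1) q₁ p) * D (0,0,1) u p)) p
      - (D (0,1,0) u p) * D (0,0,1) (D (0,1,0) (fun p => (2 * q₂ p - q₁ p * D (0,0,1) q₁ p) * D (0,0,1) u p)) p
      + (D (0,0,1) u p) * D (0,1,0) (D (0,1,0) (fun p => (2 * q₂ p - q₁ p * D (0,0,1) q₁ p) * D (0,0,1) u p)) p
      - (D (0,0,1) (D (0,1,0) u) p) * D (0,1,0) (fun p => (2 * q₂ p - q₁ p * D (0,0,1) q₁ p) * D (0,0,1) u p) p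
      + (D (0,1,0) (D (0,1,0) u) p) * D (0,0,1) (fun p => (2 * q₂ p - q₁ p * D (0,0,1) q₁ p) * D (0,0,1) u p) p = 0 := by
  have ca : ContDiff ℝ (⊤ : ℕ∞) (D (0,1,0) u) := D_contDiff _ hu
  have cb : ContDiff ℝ (⊤ : ℕ∞) (D (0,0,1) u) := D_contDiff _ hu
  have cw : ContDiff ℝ (⊤ : ℕ∞) (D (0,0,1) q₁) := D_contDiff _ hq₁
  have cax : ContDiff ℝ (⊤ : ℕ∞) (D (0,1,0) (D (0,1,0) u)) := D_contDiff _ ca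
  have cm : ContDiff ℝ (⊤ : ℕ∞) (D (0,0,1) (D (0,1,0) u)) := D_contDiff _ ca
  have cn : ContDiff ℝ (⊤ : ℕ∞) (D (0,0,1) (D (0,0,1) u)) := D_contDiff _ cb
  have cwy : ContDiff ℝ (⊤ : ℕ∞) (D (0,0,1) (D (0,0,1) q₁)) := D_contDiff _ cw
  have cr1 : ContDiff ℝ (⊤ : ℕ∞) (D (1,0,0) q₁) := D_contDiff _ hq₁
  have cs1 : ContDiff ℝ (⊤ : ℕ∞) (D (0,1,0) q₁) := D_contDiff _ hq₁
  have cr2 : ContDiff ℝ (⊤ : ℕ∞) (D (1,0,0) q₂) := D_contDiff _ hq₂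
  have cs2 : ContDiff ℝ (⊤ : ℕ∞) (D (0,1,0) q₂) := D_contDiff _ hq₂
  have cz1 : ContDiff ℝ (⊤ : ℕ∞) (D (0,0,1) (D (1,0,0) q₁)) := D_contDiff _ cr1
  have cz2 : ContDiff ℝ (⊤ : ℕ∞) (D (0,0,1) (D (0,1,0) q₁)) := D_contDiff _ cs1
  have cz7 : ContDiff ℝ (⊤ : ℕ∞) (D (0,1,0) (D (0,1,0) q₁)) := D_contDiff _ cs1
  -- product-form covering equations
  have G1 : (fun p => (D (0,0,1) u p) * (D (1,0,0) q₁ p)) = D (0,1,0) u := by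
    funext p; rw [h1 p]; field_simp [hb p]
  have G2 : (fun p => (D (0,0,1) u p) * (D (0,1,0) q₁ p)) = fun _ => (1:ℝ) := by
    funext p; rw [h2 p]; field_simp [hb p]
  have G3 : (fun p => (D (0,0,1) u p) * (D (1,0,0) q₂ p)) = fun p => (D (0,1,0) u p) * (D (0,0,1) q₁ p) - 1 := by
    funext p; rw [h3 p]; field_simp [hb p]
  have G4 : (fun p => (D (0,0,1) u p) * (D (0,1,0) q₂ p)) = D (0,0,1) q₁ := by
    funext p; rw [h4 p]; field_simp [hb p]
  -- first-level differentiated equations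
  have F1 := congrArg (D (0,0,1)) G1
  simp only [D_mul (0,0,1) (D (0,0,1) u) (D (1,0,0) q₁) cb cr1] at F1
  have F2 := congrArg (D (0,0,1)) G2
  simp only [D_mul (0,0,1) (D (0,0,1) u) (D (0,1,0) q₁) cb cs1, D_const (0,0,1) 1] at F2
  have F3 := congrArg (D (0,0,1)) G3
  simp only [D_mul (0,0,1) (D (0,0,1) u) (D (1,0,0) q₂) cb cr2,
    D_sub (0,0,1) (fun p => (D (0,1,0) u p) * (D (0,0,1) q₁ p)) (fun _ => (1:ℝ)) (ca.mul cw) contDiff_const,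
    D_mul (0,0,1) (D (0,1,0) u) (D (0,0,1) q₁) ca cw, D_const (0,0,1) 1] at F3
  have F4 := congrArg (D (0,0,1)) G4
  simp only [D_mul (0,0,1) (D (0,0,1) u) (D (0,1,0) q₂) cb cs2] at F4
  have F7 := congrArg (D (0,1,0)) G2
  simp only [D_mul (0,1,0) (D (0,0,1) u) (D (0,1,0) q₁) cb cs1, D_const (0,1,0) 1,
    D_comm (0,1,0) (0,0,1) hu] at F7
  have F8 := congrArg (D (0,1,0)) G4
  simp only [D_mul (0,1,0) (D (0,0,1) u) (D (0,1,0) q₂) cb cs2, D_comm (0,1,0) (0,0,1) hu,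
    D_comm (0,1,0) (0,0,1) hq₁] at F8
  -- second-level differentiated equations
  have F5 := congrArg (D (0,0,1)) F1
  simp only [D_add (0,0,1) (fun p => (D (0,0,1) (D (0,0,1) u) p) * (D (1,0,0) q₁ p)) (fun p => (D (0,0,1) u p) * (D (0,0,1) (D (1,0,0) q₁) p))
      (cn.mul cr1) (cb.mul cz1),
    D_mul (0,0,1) (D (0,0,1) (D (0,0,1) u)) (D (1,0,0) q₁) cn cr1,
    D_mul (0,0,1) (D (0,0,1) u) (D (0,0,1) (D (1,0,0) q₁)) cb cz1] at F5
  have F6 := congrArg (D (0,0,1)) F2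
  simp only [D_add (0,0,1) (fun p => (D (0,0,1) (D (0,0,1) u) p) * (D (0,1,0) q₁ p)) (fun p => (D (0,0,1) u p) * (D (0,0,1) (D (0,1,0) q₁) p))
      (cn.mul cs1) (cb.mul cz2),
    D_mul (0,0,1) (D (0,0,1) (D (0,0,1) u)) (D (0,1,0) q₁) cn cs1,
    D_mul (0,0,1) (D (0,0,1) u) (D (0,0,1) (D (0,1,0) q₁)) cb cz2, D_const (0,0,1) 0] at F6
  have F9 := congrArg (D (0,0,1)) F7
  simp only [D_add (0,0,1) (fun p => (D (0,0,1) (D (0,1,0) u) p) * (D (0,1,0) q₁ p)) (fun p => (D (0,0,1) u p) * (D (0,1,0) (D (0,1,0) q₁) p))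
      (cm.mul cs1) (cb.mul cz7),
    D_mul (0,0,1) (D (0,0,1) (D (0,1,0) u)) (D (0,1,0) q₁) cm cs1,
    D_mul (0,0,1) (D (0,0,1) u) (D (0,1,0) (D (0,1,0) q₁)) cb cz7, D_const (0,0,1) 0] at F9
  -- first derivatives of V
  have hVT := D_big1 (1,0,0) q₂ q₁ (D (0,0,1) q₁) (D (0,0,1) u) hq₂ hq₁ cw cb
  simp only [D_comm (1,0,0) (0,0,1) hq₁, D_comm (1,0,0) (0,0,1) hu, heq] at hVT
  have hVX := D_big1 (0,1,0) q₂ q₁ (D (0,0,1) q₁) (D (0,0,1) u) hq₂ hq₁ cw cb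
  simp only [D_comm (0,1,0) (0,0,1) hq₁, D_comm (0,1,0) (0,0,1) hu] at hVX
  have hVY := D_big1 (0,0,1) q₂ q₁ (D (0,0,1) q₁) (D (0,0,1) u) hq₂ hq₁ cw cb
  -- second derivatives of V
  have hVTY := congrArg (D (0,0,1)) hVT
  simp only [D_big2b (0,0,1) (D (1,0,0) q₂) (D (1,0,0) q₁) (D (0,0,1) (D (1,0,0) q₁)) q₁ (D (0,0,1) q₁) (D (0,0,1) u) q₂
      (fun p => (D (0,1,0) u p) * (D (0,0,1) (D (0,1,0) u) p) - (D (0,0,1) u p) * (D (0,1,0) (D (0,1,0) u) p))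
      cr2 cr1 cz1 hq₁ cw cb hq₂ ((ca.mul cm).sub (cb.mul cax)),
    D_sub (0,0,1) (fun p => (D (0,1,0) u p) * (D (0,0,1) (D (0,1,0) u) p)) (fun p => (D (0,0,1) u p) * (D (0,1,0) (D (0,1,0) u) p)) (ca.mul cm) (cb.mul cax),
    D_mul (0,0,1) (D (0,1,0) u) (D (0,0,1) (D (0,1,0) u)) ca cm,
    D_mul (0,0,1) (D (0,0,1) u) (D (0,1,0) (D (0,1,0) u)) cb cax] at hVTY
  have hVXY := congrArg (D (0,0,1)) hVX
  simp only [D_big2b (0,0,1) (D (0,1,0) q₂) (D (0,1,0) q₁) (D (0,0,1) (D (0,1,0) q₁)) q₁ (D (0,0,1) q₁) (D (0,0,1) u) q₂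
      (D (0,0,1) (D (0,1,0) u)) cs2 cs1 cz2 hq₁ cw cb hq₂ cm] at hVXY
  have hVXX := congrArg (D (0,1,0)) hVX
  simp only [D_big2b (0,1,0) (D (0,1,0) q₂) (D (0,1,0) q₁) (D (0,0,1) (D (0,1,0) q₁)) q₁ (D (0,0,1) q₁) (D (0,0,1) u) q₂
      (D (0,0,1) (D (0,1,0) u)) cs2 cs1 cz2 hq₁ cw cb hq₂ cm,
    D_comm (0,1,0) (0,0,1) hq₁, D_comm (0,1,0) (0,0,1) cs1, D_comm (0,1,0) (0,0,1) hu, D_comm (0,1,0) (0,0,1) ca] at hVXX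
  -- pointwise computation
  intro p
  simp only [hVTY, hVXY, hVXX]
  simp only [hVX, hVY]
  have S5 : (D (0,0,1) (D (1,0,0) q₁) p) = ((D (0,0,1) (D (0,1,0) u) p) - (D (0,0,1) (D (0,0,1) u) p) * (D (1,0,0) q₁ p)) / (D (0,0,1) u p) := by
    have h : (D (0,0,1) (D (0,0,1) u) p) * (D (1,0,0) q₁ p) + (D (0,0,1) u p) * (D (0,0,1) (D (1,0,0) q₁) p) = (D (0,0,1) (D (0,1,0) u) p) := congrFun F1 p
    rw [eq_div_iff (hb p)]; linear_combination h
  have S6 : (D (0,0,1) (D (0,1,0) q₁) p) = (-((D (0,0,1) (D (0,0,1) u) p) * (D (0,1,0) q₁ p))) / (D (0,0,1) u p) := by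
    have h : (D (0,0,1) (D (0,0,1) u) p) * (D (0,1,0) q₁ p) + (D (0,0,1) u p) * (D (0,0,1) (D (0,1,0) q₁) p) = 0 := congrFun F2 p
    rw [eq_div_iff (hb p)]; linear_combination h
  have S7 : (D (0,0,1) (D (1,0,0) q₂) p) = (((D (0,0,1) (D (0,1,0) u) p) * (D (0,0,1) q₁ p) + (D (0,1,0) u p) * (D (0,0,1) (D (0,0,1) q₁) p)) - (D (0,0,1) (D (0,0,1) u) p) * (D (1,0,0) q₂ p)) / (D (0,0,1) u p) := by
    have h : (D (0,0,1) (D (0,0,1) u) p) * (D (1,0,0) q₂ p) + (D (0,0,1) u p) * (D (0,0,1) (D (1,0,0) q₂) p) = ((D (0,0,1) (D (0,1,0) u) p) * (D (0,0,1) q₁ p) + (D (0,1,0) u p) * (D (0,0,1) (D (0,0,1) q₁) p)) - 0 := congrFun F3 p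
    rw [eq_div_iff (hb p)]; linear_combination h
  have S8 : (D (0,0,1) (D (0,1,0) q₂) p) = ((D (0,0,1) (D (0,0,1) q₁) p) - (D (0,0,1) (D (0,0,1) u) p) * (D (0,1,0) q₂ p)) / (D (0,0,1) u p) := by
    have h : (D (0,0,1) (D (0,0,1) u) p) * (D (0,1,0) q₂ p) + (D (0,0,1) u p) * (D (0,0,1) (D (0,1,0) q₂) p) = (D (0,0,1) (D (0,0,1) q₁) p) := congrFun F4 p
    rw [eq_div_iff (hb p)]; linear_combination h
  have S9 : (D (0,0,1) (D (0,0,1) (D (1,0,0) q₁)) p) = ((D (0,0,1) (D (0,0,1) (D (0,1,0) u)) p) - (D (0,0,1) (D (0,0,1) (D (0,0,1) u)) p) * (D (1,0,0) q₁ p) - 2 * (D (0,0,1) (D (0,0,1) u) p) * (D (0,0,1) (D (1,0,0) q₁) p)) / (D (0,0,1) u p) := by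
    have h : ((D (0,0,1) (D (0,0,1) (D (0,0,1) u)) p) * (D (1,0,0) q₁ p) + (D (0,0,1) (D (0,0,1) u) p) * (D (0,0,1) (D (1,0,0) q₁) p)) + ((D (0,0,1) (D (0,0,1) u) p) * (D (0,0,1) (D (1,0,0) q₁) p) + (D (0,0,1) u p) * (D (0,0,1) (D (0,0,1) (D (1,0,0) q₁)) p)) = (D (0,0,1) (D (0,0,1) (D (0,1,0) u)) p) := congrFun F5 p
    rw [eq_div_iff (hb p)]; linear_combination h
  have S10 : (D (0,0,1) (D (0,0,1) (D (0,1,0) q₁)) p) = (-((D (0,0,1) (D (0,0,1) (D (0,0,1) u)) p) * (D (0,1,0) q₁ p)) - 2 * (D (0,0,1) (D (0,0,1) u) p) * (D (0,0,1) (D (0,1,0) q₁) p)) / (D (0,0,1) u p) := by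
    have h : ((D (0,0,1) (D (0,0,1) (D (0,0,1) u)) p) * (D (0,1,0) q₁ p) + (D (0,0,1) (D (0,0,1) u) p) * (D (0,0,1) (D (0,1,0) q₁) p)) + ((D (0,0,1) (D (0,0,1) u) p) * (D (0,0,1) (D (0,1,0) q₁) p) + (D (0,0,1) u p) * (D (0,0,1) (D (0,0,1) (D (0,1,0) q₁)) p)) = 0 := congrFun F6 p
    rw [eq_div_iff (hb p)]; linear_combination h
  have S11 : (D (0,1,0) (D (0,1,0) q₁) p) = (-((D (0,0,1) (D (0,1,0) u) p) * (D (0,1,0) q₁ p))) / (D (0,0,1) u p) := by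
    have h : (D (0,0,1) (D (0,1,0) u) p) * (D (0,1,0) q₁ p) + (D (0,0,1) u p) * (D (0,1,0) (D (0,1,0) q₁) p) = 0 := congrFun F7 p
    rw [eq_div_iff (hb p)]; linear_combination h
  have S12 : (D (0,1,0) (D (0,1,0) q₂) p) = ((D (0,0,1) (D (0,1,0) q₁) p) - (D (0,0,1) (D (0,1,0) u) p) * (D (0,1,0) q₂ p)) / (D (0,0,1) u p) := by
    have h : (D (0,0,1) (D (0,1,0) u) p) * (D (0,1,0) q₂ p) + (D (0,0,1) u p) * (D (0,1,0) (D (0,1,0) q₂) p) = (D (0,0,1) (D (0,1,0) q₁) p) := congrFun F8 p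
    rw [eq_div_iff (hb p)]; linear_combination h
  have S13 : (D (0,0,1) (D (0,1,0) (D (0,1,0) q₁)) p) = (-((D (0,0,1) (D (0,0,1) (D (0,1,0) u)) p) * (D (0,1,0) q₁ p)) - (D (0,0,1) (D (0,1,0) u) p) * (D (0,0,1) (D (0,1,0) q₁) p) - (D (0,0,1) (D (0,0,1) u) p) * (D (0,1,0) (D (0,1,0) q₁) p)) / (D (0,0,1) u p) := by
    have h : ((D (0,0,1) (D (0,0,1) (D (0,1,0) u)) p) * (D (0,1,0) q₁ p) + (D (0,0,1) (D (0,1,0) u) p) * (D (0,0,1) (D (0,1,0) q₁) p)) + ((D (0,0,1) (D (0,0,1) u) p) * (D (0,1,0) (D (0,1,0) q₁) p) + (D (0,0,1) u p) * (D (0,0,1) (D (0,1,0) (D (0,1,0) q₁)) p)) = 0 := congrFun F9 p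
    rw [eq_div_iff (hb p)]; linear_combination h
  rw [S9, S10, S13, S12, S5, S6, S7, S8, S11, h1 p, h2 p, h3 p, h4 p]
  field_simp [hb p]
  ring_nf


/-- `ψ₋₂ = (2q₂ − q₁·q₁,y)·u_y` is a shadow in the positive
covering. -/
theorem shadow_psi_minus_two (u q₁ q₂ : ℝ × ℝ × ℝ → ℝ)
    (hu : ContDiff ℝ (⊤ : ℕ∞) u) (hq₁ : ContDiff ℝ (⊤ : ℕ∞) q₁) (hq₂ : ContDiff ℝ (⊤ : ℕ∞) q₂)
    (huy : ∀ p, py u p ≠ 0) (heq : rdDym u)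
    (hq₁t : ∀ p, pt q₁ p = px u p / py u p)
    (hq₁x : ∀ p, px q₁ p = 1 / py u p)
    (hq₂t : ∀ p, pt q₂ p = (px u p / py u p) * py q₁ p - px q₁ p)
    (hq₂x : ∀ p, px q₂ p = py q₁ p / py u p) :
    linearized u (fun p => (2 * q₂ p - q₁ p * py q₁ p) * py u p) := by
  have hV : ContDiff ℝ (⊤ : ℕ∞) (fun p => (2 * q₂ p - q₁ p * D (0,0,1) q₁ p) * D (0,0,1) u p) :=
    ((contDiff_const.mul hq₂).sub (hq₁.mul (D_contDiff _ hq₁))).mul (D_contDiff _ hu)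
  have hb' : ∀ p, D (0,0,1) u p ≠ 0 := fun p => by
    have h := huy p; rwa [py_eq hu] at h
  have h1' : ∀ p, (D (1,0,0) q₁ p) = (D (0,1,0) u p) / (D (0,0,1) u p) := fun p => by
    have h := hq₁t p; rwa [pt_eq hq₁, px_eq hu, py_eq hu] at h
  have h2' : ∀ p, (D (0,1,0) q₁ p) = 1 / (D (0,0,1) u p) := fun p => by
    have h := hq₁x p; rwa [px_eq hq₁, py_eq hu] at h
  have h3' : ∀ p, (D (1,0,0) q₂ p) = ((D (0,1,0) u p) / (D (0,0,1) u p)) * (D (0,0,1) q₁ p) - 1 / (D (0,0,1) u p) := fun p => by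
    have h := hq₂t p
    rw [hq₁x p] at h
    rwa [pt_eq hq₂, px_eq hu, py_eq hu, py_eq hq₁] at h
  have h4' : ∀ p, (D (0,1,0) q₂ p) = (D (0,0,1) q₁ p) / (D (0,0,1) u p) := fun p => by
    have h := hq₂x p; rwa [px_eq hq₂, py_eq hq₁, py_eq hu] at h
  have heqf : D (0,0,1) (D (1,0,0) u) = fun p => (D (0,1,0) u p) * (D (0,0,1) (D (0,1,0) u) p) - (D (0,0,1) u p) * (D (0,1,0) (D (0,1,0) u) p) := by
    funext p
    have h := heq p
    rwa [pt_eq hu, px_eq hu, py_eq hu, py_eq (D_contDiff (1,0,0) hu),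
      py_eq (D_contDiff (0,1,0) hu), px_eq (D_contDiff (0,1,0) hu)] at h
  have key := core u q₁ q₂ hu hq₁ hq₂ hb' heqf h1' h2' h3' h4'
  unfold linearized
  intro p
  have k := key p
  simp only [py_eq hq₁, py_eq hu, px_eq hu] 
  simp only [pt_eq hV, px_eq hV, py_eq hV]
  simp only [py_eq (D_contDiff (1,0,0) hV), py_eq (D_contDiff (0,1,0) hV),
    px_eq (D_contDiff (0,1,0) hV), py_eq (D_contDiff (0,1,0) hu), px_eq (D_contDiff (0,1,0) hu)]
  exact k
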